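/- Let n ≥ 2. [EXT] holds if and only if for every f ∈ S and every r ∈ (0,1) the rescaled map f_r belongs to S¹. -/

import Mathlib

open Set Metric Filter

noncomputable section

/-- `E n` is `ℂⁿ` with the Euclidean norm. -/
abbrev E (n : ℕ) := EuclideanSpace ℂ (Fin n)

/-- A map is univalent on `D` if it is holomorphic and injective on `D`. -/
def Univalent {n : ℕ} (f : E n → E n) (D : Set (E n)) : Prop :=
  DifferentiableOn ℂ f D ∧ Set.InjOn f D

/-- The class `S` of normalized univalent maps of the unit ball. -/
def classS (n : ℕ) : Set (E n → E n) :=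
  {f | Univalent f (ball 0 1) ∧ f 0 = 0 ∧
    fderiv ℂ f 0 = ContinuousLinearMap.id ℂ (E n)}

/-- The class `S(ℂⁿ)` of normalized entire univalent maps. -/
def classSC (n : ℕ) : Set (E n → E n) :=
  {Ψ | Differentiable ℂ Ψ ∧ Function.Injective Ψ ∧ Ψ 0 = 0 ∧
    fderiv ℂ Ψ 0 = ContinuousLinearMap.id ℂ (E n)}

/-- A normalized Loewner chain on the unit ball. -/
def IsLoewnerChain {n : ℕ} (f : ℝ → E n → E n) : Prop :=
  ContinuousOn (fun p : ℝ × E n => f p.1 p.2) (Ici 0 ×ˢ ball 0 1) ∧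
  (∀ t, 0 ≤ t → Univalent (f t) (ball 0 1)) ∧
  (∀ s t, 0 ≤ s → s ≤ t → f s '' ball 0 1 ⊆ f t '' ball 0 1) ∧
  (∀ t, 0 ≤ t → f t 0 = 0 ∧
    fderiv ℂ (f t) 0 = (Real.exp t : ℂ) • ContinuousLinearMap.id ℂ (E n))

/-- The class `S¹` of maps embedding into a normalized Loewner chain. -/
def classS1 (n : ℕ) : Set (E n → E n) :=
  {f | f ∈ classS n ∧ ∃ F : ℝ → E n → E n, IsLoewnerChain F ∧
    Set.EqOn (F 0) f (ball 0 1)}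

/-- Uniform convergence on all compact subsets of `D`. -/
def ConvUnifOnCompacts {α β : Type*} [TopologicalSpace α] [UniformSpace β]
    (F : ℕ → α → β) (f : α → β) (D : Set α) : Prop :=
  ∀ K, K ⊆ D → IsCompact K → TendstoUniformlyOn F f atTop K

/-- `(D, Ω)` is a Runge pair. -/
def RungePair {n : ℕ} (D Ω : Set (E n)) : Prop :=
  D ⊆ Ω ∧ ∀ h : E n → ℂ, DifferentiableOn ℂ h D →
    ∃ g : ℕ → E n → ℂ, (∀ k, DifferentiableOn ℂ (g k) Ω) ∧
      ConvUnifOnCompacts g h D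

/-- `D` is Runge in `ℂⁿ`. -/
def IsRunge {n : ℕ} (D : Set (E n)) : Prop := RungePair D univ

/-- An automorphism of `ℂⁿ`. -/
def IsAutomorphism {n : ℕ} (Φ : E n → E n) : Prop :=
  Differentiable ℂ Φ ∧ Function.Bijective Φ

/-- A normalized automorphism of `ℂⁿ`. -/
def IsNormalizedAutomorphism {n : ℕ} (Φ : E n → E n) : Prop :=
  IsAutomorphism Φ ∧ Φ 0 = 0 ∧ fderiv ℂ Φ 0 = ContinuousLinearMap.id ℂ (E n)

/-- `Ω` is biholomorphic to `ℂⁿ`. -/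
def BiholToCn {n : ℕ} (Ω : Set (E n)) : Prop :=
  ∃ Ψ : E n → E n, Differentiable ℂ Ψ ∧ Function.Injective Ψ ∧ Set.range Ψ = Ω

/-- A Fatou–Bieberbach domain: a proper subdomain of `ℂⁿ` biholomorphic to `ℂⁿ`. -/
def IsFatouBieberbach {n : ℕ} (Ω : Set (E n)) : Prop :=
  Ω ≠ univ ∧ BiholToCn Ω

/-- The rescaling `f_r(z) = (1/r) f (r z)`. -/
def rescale {n : ℕ} (f : E n → E n) (r : ℝ) (z : E n) : E n :=
  (r : ℂ)⁻¹ • f ((r : ℂ) • z)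

/-- The Loewner range of a chain. -/
def LoewnerRange {n : ℕ} (f : ℝ → E n → E n) : Set (E n) :=
  ⋃ u ∈ Ici (0 : ℝ), f u '' ball 0 1

/-- (AL): the Andersén–Lempert approximation theorem for maps in `S` with Runge image. -/
def AL (n : ℕ) : Prop :=
  ∀ f ∈ classS n, IsRunge (f '' ball 0 1) →
    ∃ Φ : ℕ → E n → E n, (∀ k, IsNormalizedAutomorphism (Φ k)) ∧
      ConvUnifOnCompacts Φ f (ball (0 : E n) 1)

/-- (AL'): every univalent map of the ball with Runge image is approximable by
automorphisms of `ℂⁿ`. -/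
def AL' (n : ℕ) : Prop :=
  ∀ g : E n → E n, Univalent g (ball 0 1) → IsRunge (g '' ball 0 1) →
    ∃ Φ : ℕ → E n → E n, (∀ k, IsAutomorphism (Φ k)) ∧
      ConvUnifOnCompacts Φ g (ball (0 : E n) 1)

/-- (AL-nec): a map in `S` approximable by automorphisms of `ℂⁿ` has Runge image. -/
def ALnec (n : ℕ) : Prop :=
  ∀ f ∈ classS n,
    (∃ Φ : ℕ → E n → E n, (∀ k, IsAutomorphism (Φ k)) ∧
      ConvUnifOnCompacts Φ f (ball (0 : E n) 1)) →
    IsRunge (f '' ball 0 1)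

/-- [GAL]: every `f ∈ S` with non-Runge image is approximable by entire univalent maps. -/
def GAL (n : ℕ) : Prop :=
  ∀ f ∈ classS n, ¬ IsRunge (f '' ball 0 1) →
    ∃ Ψ : ℕ → E n → E n, (∀ k, Differentiable ℂ (Ψ k) ∧ Function.Injective (Ψ k)) ∧
      ConvUnifOnCompacts Ψ f (ball (0 : E n) 1)

/-- [EXT]: every `f ∈ S` extending univalently past the closed ball is in `S¹`. -/
def EXT (n : ℕ) : Prop :=
  ∀ f ∈ classS n,
    (∃ r > (1 : ℝ), ∃ F : E n → E n, Univalent F (ball 0 r) ∧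
      Set.EqOn F f (ball 0 1)) →
    f ∈ classS1 n

/-- [FBR]: every domain biholomorphic to the ball and not Runge in `ℂⁿ` sits in a
Fatou–Bieberbach domain in a Runge way. -/
def FBR (n : ℕ) : Prop :=
  ∀ D : Set (E n), IsOpen D →
    (∃ g : E n → E n, Univalent g (ball 0 1) ∧ g '' ball 0 1 = D) →
    ¬ IsRunge D →
    ∃ Ω : Set (E n), IsFatouBieberbach Ω ∧ D ⊆ Ω ∧ RungePair D Ω

/-- [GALˢ]: strong generalized Andersén–Lempert. -/
def GALs (n : ℕ) : Prop :=
  ∀ f ∈ classS n, ¬ IsRunge (f '' ball 0 1) →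
    ∃ Ω : Set (E n), IsFatouBieberbach Ω ∧
      ∃ Ψ : ℕ → E n → E n, (∀ k, Ψ k ∈ classSC n ∧ Set.range (Ψ k) = Ω) ∧
        ConvUnifOnCompacts Ψ f (ball (0 : E n) 1)

/-- [FBRₐ]. -/
def FBRa (n : ℕ) : Prop :=
  ∀ f ∈ classS n, ∀ r ∈ Ioo (0 : ℝ) 1,
    ∃ Ω : Set (E n), BiholToCn Ω ∧ f '' ball 0 r ⊆ Ω ∧
      RungePair (f '' ball 0 r) Ω

/-- [GALₐˢ]. -/
def GALas (n : ℕ) : Prop :=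
  ∀ f ∈ classS n, ¬ IsRunge (f '' ball 0 1) → ∀ r ∈ Ioo (0 : ℝ) 1,
    ∃ Ω : Set (E n), IsFatouBieberbach Ω ∧
      ∃ Ψ : ℕ → E n → E n, (∀ k, Ψ k ∈ classSC n ∧ Set.range (Ψ k) = Ω) ∧
        ConvUnifOnCompacts Ψ (rescale f r) (ball (0 : E n) 1)

/-- A domain is entire-convexshapelike if some entire univalent map pulls it back to
a convex set. -/
def EntireConvexshapelike {n : ℕ} (Ω : Set (E n)) : Prop :=
  ∃ Ψ : E n → E n, Differentiable ℂ Ψ ∧ Function.Injective Ψ ∧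
    Ω ⊆ Set.range Ψ ∧ Convex ℝ (Ψ ⁻¹' Ω)

/-- `S¹` is dense in `S` for uniform convergence on compacta. -/
def DenseS1 (n : ℕ) : Prop :=
  ∀ f ∈ classS n, ∃ g : ℕ → E n → E n, (∀ k, g k ∈ classS1 n) ∧
    ConvUnifOnCompacts g f (ball (0 : E n) 1)

/-!
`f_r` is the restriction to `𝔹ⁿ` of a univalent map of the larger ball `(1/r)𝔹ⁿ`, so [EXT] puts it
in `S¹`. Conversely, if `f ∈ S` extends to a univalent `F` on `ρ𝔹ⁿ` with `ρ > 1`, then `F_ρ ∈ S` and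
`(F_ρ)_{1/ρ} = F`, which agrees with `f` on `𝔹ⁿ`; membership in `S¹` only depends on the values
on `𝔹ⁿ`.
-/

section Rescaling

variable {n : ℕ}

theorem rescale_rescale (f : E n → E n) (a b : ℝ) :
    rescale (rescale f a) b = rescale f (a * b) := by
  ext1 z
  simp only [rescale, smul_smul, Complex.ofReal_mul, mul_inv, mul_comm (b : ℂ)⁻¹]

theorem rescale_one (f : E n → E n) : rescale f 1 = f := by
  ext1 z
  simp [rescale]

theorem rescale_apply_zero {f : E n → E n} (hf : f 0 = 0) (c : ℝ) : rescale f c 0 = 0 := by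
  simp [rescale, hf]

theorem mapsTo_smul_ball {c : ℝ} (hc : 0 < c) (a : ℝ) :
    MapsTo (fun z : E n => (c : ℂ) • z) (ball 0 (a / c)) (ball 0 a) := by
  intro z hz
  rw [mem_ball_zero_iff] at hz ⊢
  rw [norm_smul, Complex.norm_real, Real.norm_of_nonneg hc.le]
  calc c * ‖z‖ < c * (a / c) := mul_lt_mul_of_pos_left hz hc
    _ = a := mul_div_cancel₀ a hc.ne'

theorem Univalent.rescale {f : E n → E n} {a c : ℝ} (hf : Univalent f (ball 0 a)) (hc : 0 < c) :
    Univalent (rescale f c) (ball 0 (a / c)) := by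
  have hmaps := mapsTo_smul_ball (n := n) hc a
  have hc' : (c : ℂ) ≠ 0 := Complex.ofReal_ne_zero.mpr hc.ne'
  refine ⟨?_, fun z hz w hw hzw => ?_⟩
  · exact ((hf.1.comp (differentiableOn_id.const_smul (c : ℂ)) hmaps).const_smul (c : ℂ)⁻¹)
  · have hf_eq : f ((c : ℂ) • z) = f ((c : ℂ) • w) :=
      smul_right_injective _ (inv_ne_zero hc') hzw
    exact smul_right_injective _ hc' (hf.2 (hmaps hz) (hmaps hw) hf_eq)

theorem HasFDerivAt.rescale {f : E n → E n} {L : E n →L[ℂ] E n} (hf : HasFDerivAt f L 0)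
    {c : ℝ} (hc : c ≠ 0) : HasFDerivAt (rescale f c) L 0 := by
  have hc' : (c : ℂ) ≠ 0 := Complex.ofReal_ne_zero.mpr hc
  have hlin : HasFDerivAt (fun z : E n => (c : ℂ) • z)
      ((c : ℂ) • ContinuousLinearMap.id ℂ (E n)) 0 :=
    ((c : ℂ) • ContinuousLinearMap.id ℂ (E n)).hasFDerivAt
  have hf' : HasFDerivAt f L ((c : ℂ) • (0 : E n)) := by rwa [smul_zero]
  have hcomp := hf'.comp 0 hlin
  refine (hcomp.const_smul (c : ℂ)⁻¹).congr_fderiv ?_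
  ext1 z
  simp only [smul_apply, ContinuousLinearMap.comp_apply,
    ContinuousLinearMap.id_apply, map_smul, inv_smul_smul₀ hc']

theorem hasFDerivAt_of_mem_classS {f : E n → E n} (hf : f ∈ classS n) :
    HasFDerivAt f (ContinuousLinearMap.id ℂ (E n)) 0 := by
  have hdiff := hf.1.1.differentiableAt (isOpen_ball.mem_nhds (mem_ball_self one_pos))
  exact hf.2.2 ▸ hdiff.hasFDerivAt

theorem mem_classS_of_univalent {g : E n → E n} {R : ℝ} (hg : Univalent g (ball 0 R)) (hR : 1 ≤ R)
    (hg0 : g 0 = 0) (hgd : HasFDerivAt g (ContinuousLinearMap.id ℂ (E n)) 0) : g ∈ classS n := by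
  have hsub : ball (0 : E n) 1 ⊆ ball 0 R := ball_subset_ball hR
  exact ⟨⟨hg.1.mono hsub, hg.2.mono hsub⟩, hg0, hgd.fderiv⟩

theorem mem_classS1_of_eqOn {g f : E n → E n} (hg : g ∈ classS1 n) (hf : f ∈ classS n)
    (hgf : EqOn g f (ball 0 1)) : f ∈ classS1 n := by
  obtain ⟨-, F, hF, hFg⟩ := hg
  exact ⟨hf, F, hF, hFg.trans hgf⟩

theorem rescale_mem_classS1_of_EXT (hext : EXT n) {f : E n → E n} (hf : f ∈ classS n) {r : ℝ}
    (hr : r ∈ Ioo (0 : ℝ) 1) : rescale f r ∈ classS1 n := by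
  obtain ⟨hr0, hr1⟩ := hr
  have hru : Univalent (rescale f r) (ball 0 (1 / r)) := hf.1.rescale hr0
  have h1r : 1 < 1 / r := by rwa [lt_div_iff₀ hr0, one_mul]
  have hmem : rescale f r ∈ classS n :=
    mem_classS_of_univalent hru h1r.le (rescale_apply_zero hf.2.1 r)
      ((hasFDerivAt_of_mem_classS hf).rescale hr0.ne')
  exact hext _ hmem ⟨1 / r, h1r, rescale f r, hru, eqOn_refl _ _⟩

theorem EXT_of_rescale_mem_classS1
    (H : ∀ f ∈ classS n, ∀ r ∈ Ioo (0 : ℝ) 1, rescale f r ∈ classS1 n) : EXT n := by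
  rintro f hf ⟨ρ, hρ, F, hFu, hFf⟩
  have hρ0 : 0 < ρ := one_pos.trans hρ
  have hF0 : F 0 = 0 := (hFf (mem_ball_self one_pos)).trans hf.2.1
  have hFd : HasFDerivAt F (ContinuousLinearMap.id ℂ (E n)) 0 :=
    (hasFDerivAt_of_mem_classS hf).congr_of_eventuallyEq
      (eventuallyEq_of_mem (isOpen_ball.mem_nhds (mem_ball_self one_pos)) hFf)
  have hgu : Univalent (rescale F ρ) (ball 0 1) := div_self hρ0.ne' ▸ hFu.rescale hρ0
  have hg : rescale F ρ ∈ classS n :=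
    mem_classS_of_univalent hgu le_rfl (rescale_apply_zero hF0 ρ) (hFd.rescale hρ0.ne')
  have hgF : rescale (rescale F ρ) ρ⁻¹ = F := by
    rw [rescale_rescale, mul_inv_cancel₀ hρ0.ne', rescale_one]
  have hmem := H _ hg ρ⁻¹ ⟨inv_pos.mpr hρ0, inv_lt_one_of_one_lt₀ hρ⟩
  exact mem_classS1_of_eqOn (hgF ▸ hmem) hf hFf

end Rescaling

theorem stmt5_general (n : ℕ) :
    EXT n ↔ ∀ f ∈ classS n, ∀ r ∈ Ioo (0 : ℝ) 1, rescale f r ∈ classS1 n :=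
  ⟨fun hext _ hf _ hr => rescale_mem_classS1_of_EXT hext hf hr, EXT_of_rescale_mem_classS1⟩

/-- [EXT] holds iff for every `f ∈ S` and `r ∈ (0,1)` the rescaled map
`f_r` belongs to `S¹`. -/
theorem stmt5 (n : ℕ) (hn : 2 ≤ n) :
    EXT n ↔ ∀ f ∈ classS n, ∀ r ∈ Ioo (0 : ℝ) 1, rescale f r ∈ classS1 n :=
  stmt5_general n
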